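/- arXiv:2512.05226 — 2 statements merged into one kernel-verified Lean document; each statement's English description precedes it below -/
import Mathlib

section
/- Let p ≥ 1 and let δ : Fin p → ℤ be rank displacements satisfying ∑ᵢ δᵢ² = (p(p²-1)/6)·(1-ρ) for some real ρ ≤ 1. Suppose the minimiser of the surrogate objective has rank l on the target objective, so that δ₁ = l - 1 with l ≥ 1. If the sorted target values f₍ᵢ₎ satisfy f₍ᵢ₎ - f₍ⱼ₎ ≤ K(i - j) for all i ≥ j with K ≥ 0, then f₍ₗ₎ - f₍₁₎ ≤ K·√((p(p²-1)/6)·(1-ρ)). -/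
/-- VaRDASS Theorem 2 (worst-case error bound): if the rank displacements `δ`
satisfy the Spearman identity `∑ δᵢ² = (p(p²-1)/6)(1-ρ)`, the surrogate
minimiser has target rank `l` (so `δ₁ = l - 1`), and the sorted target values
grow at rate at most `K`, then `f₍ₗ₎ - f₍₁₎ ≤ K √((p(p²-1)/6)(1-ρ))`. -/
theorem stmt_2 (p : ℕ) (hp : 1 ≤ p) (f : ℕ → ℝ) (K ρ : ℝ) (hK : 0 ≤ K)
    (hρ : ρ ≤ 1) (δ : Fin p → ℤ)
    (hδsum : (∑ i, ((δ i : ℝ)) ^ 2) =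
      ((p : ℝ) * ((p : ℝ) ^ 2 - 1) / 6) * (1 - ρ))
    (l : ℕ) (hl : 1 ≤ l) (hδ1 : δ ⟨0, hp⟩ = (l : ℤ) - 1)
    (hgrowth : ∀ i j : ℕ, j ≤ i → f i - f j ≤ K * ((i : ℝ) - (j : ℝ))) :
    f l - f 1 ≤ K * Real.sqrt (((p : ℝ) * ((p : ℝ) ^ 2 - 1) / 6) * (1 - ρ)) := by
  set S : ℝ := ((p : ℝ) * ((p : ℝ) ^ 2 - 1) / 6) * (1 - ρ) with hS
  have h1 : ((l : ℝ) - 1) ^ 2 ≤ S := by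
    have := Finset.single_le_sum (f := fun i => ((δ i : ℝ)) ^ 2)
      (fun i _ => sq_nonneg _) (Finset.mem_univ ⟨0, hp⟩)
    rw [hδsum] at this
    simpa [hδ1] using this
  have hl1 : (0:ℝ) ≤ (l : ℝ) - 1 := by
    have : (1:ℝ) ≤ (l:ℝ) := by exact_mod_cast hl
    linarith
  have h2 : (l : ℝ) - 1 ≤ Real.sqrt S := by
    rw [show (l:ℝ) - 1 = Real.sqrt (((l:ℝ)-1)^2) from (Real.sqrt_sq hl1).symm]
    exact Real.sqrt_le_sqrt h1
  calc f l - f 1 ≤ K * ((l : ℝ) - 1) := by simpa using hgrowth l 1 hl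
    _ ≤ K * Real.sqrt S := by exact mul_le_mul_of_nonneg_left h2 hK
end

section
/- Let A and Σ be diagonal k×k matrices, J the k×k all-ones matrix, and C = I - JA. Then Tr((AC Σ)²) = Tr((AΣ)²) + (Tr(A²Σ))² - 2·Tr(A³Σ²). -/
open Matrix

/-- Trace identity from the proof of VaRDASS Theorem 4: for diagonal `A`, `Σ`,
`J` the all-ones matrix and `C = I - JA`,
`Tr((ACΣ)²) = Tr((AΣ)²) + (Tr(A²Σ))² - 2 Tr(A³Σ²)`. -/
theorem stmt_8 (k : ℕ) (A S : Matrix (Fin k) (Fin k) ℝ)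
    (hA : A.IsDiag) (hS : S.IsDiag)
    (J : Matrix (Fin k) (Fin k) ℝ) (hJ : ∀ i j, J i j = 1)
    (C : Matrix (Fin k) (Fin k) ℝ) (hC : C = 1 - J * A) :
    Matrix.trace ((A * C * S) * (A * C * S)) =
      Matrix.trace ((A * S) * (A * S)) +
        (Matrix.trace (A * A * S)) ^ 2 -
        2 * Matrix.trace (A * A * A * (S * S)) := by
  set a := A.diag with ha
  set s := S.diag with hs
  have hA' : A = Matrix.diagonal a := hA.diagonal_diag.symm
  have hS' : S = Matrix.diagonal s := hS.diagonal_diag.symm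
  have key : A * C * S =
      Matrix.of (fun i j => a i * ((if i = j then (1:ℝ) else 0) - a j) * s j) := by
    subst hC
    ext i j
    rw [hA', hS']
    simp [Matrix.mul_apply, Matrix.diagonal_apply, Matrix.one_apply, hJ,
      Finset.mul_sum, mul_ite, ite_mul, mul_sub, sub_mul]
  have hM : ∀ i j : Fin k,
      (Matrix.of (fun i j => a i * ((if i = j then (1:ℝ) else 0) - a j) * s j)) i j *
      (Matrix.of (fun i j => a i * ((if i = j then (1:ℝ) else 0) - a j) * s j)) j i =
      (if j = i then a i^2*s i^2 - 2*a i^3*s i^2 else 0) + a i^2*s i*(a j^2*s j) := by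
    intro i j
    by_cases h : i = j
    · subst h; simp; ring
    · simp [h, Ne.symm h]; ring
  have lhs_eq : Matrix.trace ((A * C * S) * (A * C * S)) =
      (∑ i, (a i^2*s i^2 - 2*(a i^3*s i^2))) + (∑ i, a i^2*s i)^2 := by
    rw [key]
    simp only [Matrix.trace, Matrix.diag, Matrix.mul_apply, hM,
      Finset.sum_add_distrib, Finset.sum_ite_eq, Finset.sum_ite_eq', Finset.mem_univ, if_true]
    congr 1
    · apply Finset.sum_congr rfl; intros; simp [Finset.sum_ite_eq']; ring
    · rw [pow_two, Finset.sum_mul_sum]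
  have t1 : Matrix.trace ((A * S) * (A * S)) = ∑ i, a i^2*s i^2 := by
    rw [hA', hS']
    simp [Matrix.diagonal_mul_diagonal, Matrix.trace_diagonal]
    apply Finset.sum_congr rfl; intros; ring
  have t2 : Matrix.trace (A * A * S) = ∑ i, a i^2*s i := by
    rw [hA', hS']
    simp [Matrix.diagonal_mul_diagonal, Matrix.trace_diagonal]
    apply Finset.sum_congr rfl; intros; ring
  have t3 : Matrix.trace (A * A * A * (S * S)) = ∑ i, a i^3*s i^2 := by
    rw [hA', hS']
    simp [Matrix.diagonal_mul_diagonal, Matrix.trace_diagonal]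
    apply Finset.sum_congr rfl; intros; ring
  rw [lhs_eq, t1, t2, t3, Finset.sum_sub_distrib, ← Finset.mul_sum]
  ring
end
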